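/- Let X, X', Y, Y' be random variables taking values in finite types such that Y' and (X, X') are conditionally independent given Y. Then I(X; Y) − I(X'; Y') = I(X; Y | X') + I(X; Y; X' | Y') − I(X'; Y' | X), where I(A;B;C|Z) := I(A;B|Z) − I(A;B|(C,Z)) is the conditional interaction information. (This is the decomposition −Δi_j = a_j + b_j − c_j of the increase of an internal correlation.) -/
import Mathlib


open scoped BigOperators

section InfoDefs

variable {Ω : Type*} [Fintype Ω]

/-- Pushforward probability mass function: `P(X = a)` for the random variable `X`
on the finite probability space `(Ω, μ)`. -/
def prob {α : Type*} [DecidableEq α] (μ : Ω → ℝ) (X : Ω → α) (a : α) : ℝ :=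
  ∑ ω, if X ω = a then μ ω else 0

/-- Shannon entropy (natural logarithm) of the random variable `X` under `μ`. -/
noncomputable def ent {α : Type*} [Fintype α] [DecidableEq α] (μ : Ω → ℝ) (X : Ω → α) : ℝ :=
  ∑ a, Real.negMulLog (prob μ X a)

/-- Conditional Shannon entropy `H(X | Y)`. -/
noncomputable def condEnt {α β : Type*} [Fintype α] [DecidableEq α] [Fintype β] [DecidableEq β]
    (μ : Ω → ℝ) (X : Ω → α) (Y : Ω → β) : ℝ :=
  ent μ (fun ω => (X ω, Y ω)) - ent μ Y

/-- Mutual information `I(X;Y)`. -/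
noncomputable def mi {α β : Type*} [Fintype α] [DecidableEq α] [Fintype β] [DecidableEq β]
    (μ : Ω → ℝ) (X : Ω → α) (Y : Ω → β) : ℝ :=
  ent μ X + ent μ Y - ent μ (fun ω => (X ω, Y ω))

/-- Conditional mutual information `I(X;Y|Z)`. -/
noncomputable def cmi {α β γ : Type*} [Fintype α] [DecidableEq α] [Fintype β] [DecidableEq β]
    [Fintype γ] [DecidableEq γ] (μ : Ω → ℝ) (X : Ω → α) (Y : Ω → β) (Z : Ω → γ) : ℝ :=
  ent μ (fun ω => (X ω, Z ω)) + ent μ (fun ω => (Y ω, Z ω))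
    - ent μ (fun ω => (X ω, Y ω, Z ω)) - ent μ Z

/-- Conditional independence of `U` and `V` given `W`:
the joint law satisfies `P(U,V,W)·P(W) = P(U,W)·P(V,W)` pointwise. -/
def CondIndep {α β γ : Type*} [DecidableEq α] [DecidableEq β] [DecidableEq γ]
    (μ : Ω → ℝ) (U : Ω → α) (V : Ω → β) (W : Ω → γ) : Prop :=
  ∀ u v w, prob μ (fun ω => (U ω, V ω, W ω)) (u, v, w) * prob μ W w
    = prob μ (fun ω => (U ω, W ω)) (u, w) * prob μ (fun ω => (V ω, W ω)) (v, w)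

/-- The tuple `(A_0, …, A_{n-1})` of the first `n` members of a family of random
variables, viewed as a single random variable valued in a (dependent) product type. -/
def tup {α : ℕ → Type*} (A : (i : ℕ) → Ω → α i) (n : ℕ) : Ω → ((i : Fin n) → α i.1) :=
  fun ω i => A i.1 ω

/-- The restriction `(A_i)_{i ∈ s}` of a family of random variables to a finite index
set `s`, viewed as a single random variable (a one-point constant if `s = ∅`). -/
def restrict {α : ℕ → Type*} (A : (i : ℕ) → Ω → α i) (s : Finset ℕ) :
    Ω → ((i : s) → α i.1) :=
  fun ω i => A i.1 ω

end InfoDefs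

section InterInfo

variable {Ω : Type*} [Fintype Ω]

/-- Conditional interaction information `I(A;B;C|Z) := I(A;B|Z) − I(A;B|(C,Z))`. -/
noncomputable def interInfo {α β γ δ : Type*} [Fintype α] [DecidableEq α] [Fintype β]
    [DecidableEq β] [Fintype γ] [DecidableEq γ] [Fintype δ] [DecidableEq δ]
    (μ : Ω → ℝ) (A : Ω → α) (B : Ω → β) (C : Ω → γ) (Z : Ω → δ) : ℝ :=
  cmi μ A B Z - cmi μ A B (fun ω => (C ω, Z ω))

end InterInfo

section Aux
variable {Ω : Type*} [Fintype Ω]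

lemma prob_nonneg {α : Type*} [DecidableEq α] {μ : Ω → ℝ} (hμ0 : ∀ ω, 0 ≤ μ ω)
    (X : Ω → α) (a : α) : 0 ≤ prob μ X a :=
  Finset.sum_nonneg fun ω _ => by split <;> simp [hμ0 ω]

lemma prob_map {ζ κ : Type*} [Fintype ζ] [DecidableEq ζ] [DecidableEq κ]
    (μ : Ω → ℝ) (g : ζ → κ) (T : Ω → ζ) (k : κ) :
    prob μ (fun ω => g (T ω)) k = ∑ z, if g z = k then prob μ T z else 0 := by
  simp only [prob]
  have : ∀ z : ζ, (if g z = k then (∑ ω, if T ω = z then μ ω else 0) else 0)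
      = ∑ ω, if g z = k then (if T ω = z then μ ω else 0) else 0 := by
    intro z; split <;> simp
  rw [Finset.sum_congr rfl fun z _ => this z, Finset.sum_comm]
  refine Finset.sum_congr rfl fun ω _ => ?_
  rw [Finset.sum_eq_single (T ω)]
  · simp
  · intro z _ hz
    split
    · rw [if_neg (Ne.symm hz)]
    · rfl
  · simp

lemma prob_le_map {ζ κ : Type*} [DecidableEq ζ] [DecidableEq κ] {μ : Ω → ℝ}
    (hμ0 : ∀ ω, 0 ≤ μ ω) (g : ζ → κ) (T : Ω → ζ) (z : ζ) :
    prob μ T z ≤ prob μ (fun ω => g (T ω)) (g z) := by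
  refine Finset.sum_le_sum fun ω _ => ?_
  by_cases h1 : T ω = z
  · simp [h1]
  · rw [if_neg h1]; split <;> simp [hμ0 ω]

lemma sum_mul_comp {ζ κ : Type*} [Fintype ζ] [Fintype κ] [DecidableEq κ]
    (p : ζ → ℝ) (π : ζ → κ) (g : κ → ℝ) :
    ∑ k, (∑ z, if π z = k then p z else 0) * g k = ∑ z, p z * g (π z) := by
  simp only [Finset.sum_mul, ite_mul, zero_mul]
  rw [Finset.sum_comm]
  refine Finset.sum_congr rfl fun z _ => ?_
  simp

lemma ent_eq {α : Type*} [Fintype α] [DecidableEq α] (μ : Ω → ℝ) (X : Ω → α) :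
    ent μ X = -∑ a, prob μ X a * Real.log (prob μ X a) := by
  simp [ent, Real.negMulLog, Finset.sum_neg_distrib]

lemma ent_map {ζ κ : Type*} [Fintype ζ] [DecidableEq ζ] [Fintype κ] [DecidableEq κ]
    (μ : Ω → ℝ) (T : Ω → ζ) (g : ζ → κ) :
    ent μ (fun ω => g (T ω))
      = -∑ z, prob μ T z * Real.log (prob μ (fun ω => g (T ω)) (g z)) := by
  rw [ent_eq]
  rw [show (∑ k, prob μ (fun ω => g (T ω)) k * Real.log (prob μ (fun ω => g (T ω)) k))
      = ∑ k, (∑ z, if g z = k then prob μ T z else 0) * Real.log (prob μ (fun ω => g (T ω)) k)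
    from Finset.sum_congr rfl fun k _ => by rw [← prob_map]]
  rw [sum_mul_comp (prob μ T) g (fun k => Real.log (prob μ (fun ω => g (T ω)) k))]

lemma ent_comp_inj {ζ κ : Type*} [Fintype ζ] [DecidableEq ζ] [Fintype κ] [DecidableEq κ]
    (μ : Ω → ℝ) (f : ζ → κ) (hf : Function.Injective f) (Z : Ω → ζ) :
    ent μ (fun ω => f (Z ω)) = ent μ Z := by
  have hzero : ∀ k ∈ Finset.univ, k ∉ Finset.univ.image f →
      Real.negMulLog (prob μ (fun ω => f (Z ω)) k) = 0 := by
    intro k _ hk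
    have : prob μ (fun ω => f (Z ω)) k = 0 := by
      refine Finset.sum_eq_zero fun ω _ => ?_
      rw [if_neg]
      intro hc
      exact hk (Finset.mem_image.2 ⟨Z ω, Finset.mem_univ _, hc⟩)
    rw [this, Real.negMulLog_zero]
  rw [ent, ← Finset.sum_subset (Finset.subset_univ _) hzero,
    Finset.sum_image (fun a _ b _ hab => hf hab)]
  refine Finset.sum_congr rfl fun a _ => ?_
  congr 1
  simp [prob, hf.eq_iff]


lemma condIndep_ent {α β γ : Type*} [Fintype α] [DecidableEq α] [Fintype β] [DecidableEq β]
    [Fintype γ] [DecidableEq γ] (μ : Ω → ℝ) (hμ0 : ∀ ω, 0 ≤ μ ω)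
    (U : Ω → α) (V : Ω → β) (W : Ω → γ) (h : CondIndep μ U V W) :
    ent μ (fun ω => (U ω, V ω, W ω)) + ent μ W
      = ent μ (fun ω => (U ω, W ω)) + ent μ (fun ω => (V ω, W ω)) := by
  set T : Ω → α × β × γ := fun ω => (U ω, V ω, W ω) with hT
  have e1 : ent μ (fun ω => (U ω, V ω, W ω)) = -∑ z, prob μ T z * Real.log (prob μ T z) :=
    ent_eq μ T
  have e2 : ent μ W = -∑ z : α × β × γ, prob μ T z * Real.log (prob μ W z.2.2) :=
    ent_map μ T (fun z => z.2.2)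
  have e3 : ent μ (fun ω => (U ω, W ω))
      = -∑ z : α × β × γ, prob μ T z * Real.log (prob μ (fun ω => (U ω, W ω)) (z.1, z.2.2)) :=
    ent_map μ T (fun z => (z.1, z.2.2))
  have e4 : ent μ (fun ω => (V ω, W ω))
      = -∑ z : α × β × γ, prob μ T z * Real.log (prob μ (fun ω => (V ω, W ω)) (z.2.1, z.2.2)) :=
    ent_map μ T (fun z => (z.2.1, z.2.2))
  have key : ∑ z : α × β × γ,
      (prob μ T z * Real.log (prob μ (fun ω => (U ω, W ω)) (z.1, z.2.2))
        + prob μ T z * Real.log (prob μ (fun ω => (V ω, W ω)) (z.2.1, z.2.2))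
        - prob μ T z * Real.log (prob μ T z)
        - prob μ T z * Real.log (prob μ W z.2.2)) = 0 := by
    refine Finset.sum_eq_zero fun z _ => ?_
    by_cases h0 : prob μ T z = 0
    · simp [h0]
    · have hp : 0 < prob μ T z := (prob_nonneg hμ0 T z).lt_of_ne' h0
      have hUW : 0 < prob μ (fun ω => (U ω, W ω)) (z.1, z.2.2) :=
        lt_of_lt_of_le hp (prob_le_map hμ0 (fun z : α × β × γ => (z.1, z.2.2)) T z)
      have hVW : 0 < prob μ (fun ω => (V ω, W ω)) (z.2.1, z.2.2) :=
        lt_of_lt_of_le hp (prob_le_map hμ0 (fun z : α × β × γ => (z.2.1, z.2.2)) T z)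
      have hW : 0 < prob μ W z.2.2 :=
        lt_of_lt_of_le hp (prob_le_map hμ0 (fun z : α × β × γ => z.2.2) T z)
      have hfac := h z.1 z.2.1 z.2.2
      simp only [Prod.mk.eta, ← hT] at hfac
      have hlog := congrArg Real.log hfac
      rw [Real.log_mul hp.ne' hW.ne', Real.log_mul hUW.ne' hVW.ne'] at hlog
      linear_combination (-(prob μ T z)) * hlog
  rw [Finset.sum_sub_distrib, Finset.sum_sub_distrib, Finset.sum_add_distrib] at key
  rw [e1, e2, e3, e4]
  linarith

end Aux

set_option maxHeartbeats 1000000 in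
/-- Decomposition `−Δi_j = a_j + b_j − c_j` of the increase of an
internal correlation: if `Y' ⊥ (X,X') | Y`, then
`I(X;Y) − I(X';Y') = I(X;Y|X') + I(X;Y;X'|Y') − I(X';Y'|X)`. -/
theorem statement7 {Ω : Type*} [Fintype Ω] (μ : Ω → ℝ)
    (hμ0 : ∀ ω, 0 ≤ μ ω) (hμ1 : ∑ ω, μ ω = 1)
    {α α' β β' : Type*} [Fintype α] [DecidableEq α] [Fintype α'] [DecidableEq α']
    [Fintype β] [DecidableEq β] [Fintype β'] [DecidableEq β']
    (X : Ω → α) (X' : Ω → α') (Y : Ω → β) (Y' : Ω → β')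
    (h : CondIndep μ Y' (fun ω => (X ω, X' ω)) Y) :
    mi μ X Y - mi μ X' Y'
      = cmi μ X Y X' + interInfo μ X Y X' Y' - cmi μ X' Y' X := by
  classical
  -- marginalization: derive the two sub conditional independences
  have hmX : CondIndep μ Y' X Y := by
    intro y' x y
    have hm1 : prob μ (fun ω => (Y' ω, X ω, Y ω)) (y', x, y)
        = ∑ x', prob μ (fun ω => (Y' ω, (X ω, X' ω), Y ω)) (y', (x, x'), y) := by
      simp only [prob]
      rw [Finset.sum_comm]
      refine Finset.sum_congr rfl fun ω _ => ?_
      by_cases h1 : Y' ω = y' <;> by_cases h2 : X ω = x <;> by_cases h3 : Y ω = y <;>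
        simp [Prod.ext_iff, h1, h2, h3]
    have hm2 : prob μ (fun ω => (X ω, Y ω)) (x, y)
        = ∑ x', prob μ (fun ω => ((X ω, X' ω), Y ω)) ((x, x'), y) := by
      simp only [prob]
      rw [Finset.sum_comm]
      refine Finset.sum_congr rfl fun ω _ => ?_
      by_cases h2 : X ω = x <;> by_cases h3 : Y ω = y <;>
        simp [Prod.ext_iff, h2, h3]
    rw [hm1, hm2, Finset.sum_mul, Finset.mul_sum]
    exact Finset.sum_congr rfl fun x' _ => h y' (x, x') y
  have hmX' : CondIndep μ Y' X' Y := by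
    intro y' x' y
    have hm1 : prob μ (fun ω => (Y' ω, X' ω, Y ω)) (y', x', y)
        = ∑ x, prob μ (fun ω => (Y' ω, (X ω, X' ω), Y ω)) (y', (x, x'), y) := by
      simp only [prob]
      rw [Finset.sum_comm]
      refine Finset.sum_congr rfl fun ω _ => ?_
      by_cases h1 : Y' ω = y' <;> by_cases h2 : X' ω = x' <;> by_cases h3 : Y ω = y <;>
        simp [Prod.ext_iff, h1, h2, h3]
    have hm2 : prob μ (fun ω => (X' ω, Y ω)) (x', y)
        = ∑ x, prob μ (fun ω => ((X ω, X' ω), Y ω)) ((x, x'), y) := by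
      simp only [prob]
      rw [Finset.sum_comm]
      refine Finset.sum_congr rfl fun ω _ => ?_
      by_cases h2 : X' ω = x' <;> by_cases h3 : Y ω = y <;>
        simp [Prod.ext_iff, h2, h3]
    rw [hm1, hm2, Finset.sum_mul, Finset.mul_sum]
    exact Finset.sum_congr rfl fun x _ => h y' (x, x') y
  -- entropy identities from conditional independence
  have F1 := condIndep_ent μ hμ0 Y' (fun ω => (X ω, X' ω)) Y h
  have F2 := condIndep_ent μ hμ0 Y' X Y hmX
  have F3 := condIndep_ent μ hμ0 Y' X' Y hmX'
  -- relabelings to canonical order (X, X', Y, Y')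
  have rb1 : ent μ (fun ω => (Y ω, X' ω)) = ent μ (fun ω => (X' ω, Y ω)) :=
    ent_comp_inj μ (fun p : α' × β => (p.2, p.1)) (Function.LeftInverse.injective (g := fun p : β × α' => (p.2, p.1)) fun z => rfl) (fun ω => (X' ω, Y ω))
  have rb2 : ent μ (fun ω => (X ω, Y ω, X' ω)) = ent μ (fun ω => (X ω, X' ω, Y ω)) :=
    ent_comp_inj μ (fun p : α × α' × β => (p.1, p.2.2, p.2.1))
      (Function.LeftInverse.injective (g := fun p : α × β × α' => (p.1, p.2.2, p.2.1)) fun z => rfl) (fun ω => (X ω, X' ω, Y ω))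
  have rb3 : ent μ (fun ω => (Y ω, X' ω, Y' ω)) = ent μ (fun ω => (X' ω, Y ω, Y' ω)) :=
    ent_comp_inj μ (fun p : α' × β × β' => (p.2.1, p.1, p.2.2))
      (Function.LeftInverse.injective (g := fun p : β × α' × β' => (p.2.1, p.1, p.2.2)) fun z => rfl) (fun ω => (X' ω, Y ω, Y' ω))
  have rb4 : ent μ (fun ω => (X ω, Y ω, X' ω, Y' ω)) = ent μ (fun ω => (X ω, X' ω, Y ω, Y' ω)) :=
    ent_comp_inj μ (fun p : α × α' × β × β' => (p.1, p.2.2.1, p.2.1, p.2.2.2))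
      (Function.LeftInverse.injective (g := fun p : α × β × α' × β' => (p.1, p.2.2.1, p.2.1, p.2.2.2)) fun z => rfl) (fun ω => (X ω, X' ω, Y ω, Y' ω))
  have rb5 : ent μ (fun ω => (X' ω, X ω)) = ent μ (fun ω => (X ω, X' ω)) :=
    ent_comp_inj μ (fun p : α × α' => (p.2, p.1)) (Function.LeftInverse.injective (g := fun p : α' × α => (p.2, p.1)) fun z => rfl) (fun ω => (X ω, X' ω))
  have rb6 : ent μ (fun ω => (Y' ω, X ω)) = ent μ (fun ω => (X ω, Y' ω)) :=
    ent_comp_inj μ (fun p : α × β' => (p.2, p.1)) (Function.LeftInverse.injective (g := fun p : β' × α => (p.2, p.1)) fun z => rfl) (fun ω => (X ω, Y' ω))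
  have rb7 : ent μ (fun ω => (X' ω, Y' ω, X ω)) = ent μ (fun ω => (X ω, X' ω, Y' ω)) :=
    ent_comp_inj μ (fun p : α × α' × β' => (p.2.1, p.2.2, p.1))
      (Function.LeftInverse.injective (g := fun p : α' × β' × α => (p.2.2, p.1, p.2.1)) fun z => rfl) (fun ω => (X ω, X' ω, Y' ω))
  have rb8 : ent μ (fun ω => (Y' ω, (X ω, X' ω), Y ω)) = ent μ (fun ω => (X ω, X' ω, Y ω, Y' ω)) :=
    ent_comp_inj μ (fun p : α × α' × β × β' => (p.2.2.2, (p.1, p.2.1), p.2.2.1))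
      (Function.LeftInverse.injective (g := fun p : β' × (α × α') × β => (p.2.1.1, p.2.1.2, p.2.2, p.1)) fun z => rfl) (fun ω => (X ω, X' ω, Y ω, Y' ω))
  have rb9 : ent μ (fun ω => ((X ω, X' ω), Y ω)) = ent μ (fun ω => (X ω, X' ω, Y ω)) :=
    ent_comp_inj μ (fun p : α × α' × β => ((p.1, p.2.1), p.2.2))
      (Function.LeftInverse.injective (g := fun p : (α × α') × β => (p.1.1, p.1.2, p.2)) fun z => rfl) (fun ω => (X ω, X' ω, Y ω))
  have rb10 : ent μ (fun ω => (Y' ω, X ω, Y ω)) = ent μ (fun ω => (X ω, Y ω, Y' ω)) :=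
    ent_comp_inj μ (fun p : α × β × β' => (p.2.2, p.1, p.2.1))
      (Function.LeftInverse.injective (g := fun p : β' × α × β => (p.2.1, p.2.2, p.1)) fun z => rfl) (fun ω => (X ω, Y ω, Y' ω))
  have rb11 : ent μ (fun ω => (Y' ω, Y ω)) = ent μ (fun ω => (Y ω, Y' ω)) :=
    ent_comp_inj μ (fun p : β × β' => (p.2, p.1)) (Function.LeftInverse.injective (g := fun p : β' × β => (p.2, p.1)) fun z => rfl) (fun ω => (Y ω, Y' ω))
  have rb12 : ent μ (fun ω => (Y' ω, X' ω, Y ω)) = ent μ (fun ω => (X' ω, Y ω, Y' ω)) :=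
    ent_comp_inj μ (fun p : α' × β × β' => (p.2.2, p.1, p.2.1))
      (Function.LeftInverse.injective (g := fun p : β' × α' × β => (p.2.1, p.2.2, p.1)) fun z => rfl) (fun ω => (X' ω, Y ω, Y' ω))
  rw [rb8, rb9] at F1
  rw [rb10, rb11] at F2
  rw [rb12, rb11] at F3
  simp only [mi, cmi, interInfo]
  rw [rb1, rb2, rb3, rb4, rb5, rb6, rb7]
  linarith [F1, F2, F3]
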